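/- Let u = (u_0,…,u_n) ∈ 𝒜_m be a local minimizer of the energy E in the L^∞(Ω)^{n+1} topology. Then for every i = 1,…,n it holds u_i = (m_i/(|Ω| − m_0)) (1 − u_0) almost everywhere in Ω; in particular, the components u_1,…,u_n are all proportional to 1 − u_0. -/

import Mathlib

/-!
STATEMENT 3: For a local minimizer `u ∈ 𝒜_m` of `E` in the `L^∞` topology,
`u_i = (m_i/(|Ω| − m_0))(1 − u_0)` a.e. in `Ω` for every `i = 1,…,n`.
-/

open MeasureTheory

noncomputable section

/-- The free energy functional. -/
def energyE {d n : ℕ} (Ω : Set (EuclideanSpace ℝ (Fin d))) (ε β : ℝ)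
    (u : Fin (n + 1) → EuclideanSpace ℝ (Fin d) → ℝ) : ℝ :=
  ∫ x in Ω, ((∑ i, (u i x * Real.log (u i x) - u i x + 1))
    + ε / 2 * ‖fderiv ℝ (u 0) x‖ ^ 2 + β * u 0 x * (1 - u 0 x))

/-- Membership in the admissible set `𝒜_m`. -/
def Admissible {d n : ℕ} (Ω : Set (EuclideanSpace ℝ (Fin d)))
    (m : Fin (n + 1) → ℝ) (u : Fin (n + 1) → EuclideanSpace ℝ (Fin d) → ℝ) : Prop :=
  (∀ i, AEStronglyMeasurable (u i) (volume.restrict Ω)) ∧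
  (∀ i, ∃ C : ℝ, ∀ᵐ x ∂volume.restrict Ω, |u i x| ≤ C) ∧
  (∀ i, ∀ᵐ x ∂volume.restrict Ω, 0 ≤ u i x) ∧
  (∀ i, ∫ x in Ω, u i x = m i) ∧
  (∀ᵐ x ∂volume.restrict Ω, ∑ i, u i x = 1) ∧
  DifferentiableOn ℝ (u 0) Ω ∧
  IntegrableOn (fun x => ‖fderiv ℝ (u 0) x‖ ^ 2) Ω

/-- `u` is a local minimizer of `E` over `𝒜_m` for the `L^∞(Ω)^{n+1}` topology. -/
def IsLocalMinimizer {d n : ℕ} (Ω : Set (EuclideanSpace ℝ (Fin d))) (ε β : ℝ)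
    (m : Fin (n + 1) → ℝ) (u : Fin (n + 1) → EuclideanSpace ℝ (Fin d) → ℝ) : Prop :=
  Admissible Ω m u ∧
  ∃ ϵ > (0 : ℝ), ∀ v, Admissible Ω m v →
    (∀ i, ∀ᵐ x ∂volume.restrict Ω, |v i x - u i x| ≤ ϵ) →
    energyE Ω ε β u ≤ energyE Ω ε β v

def phiE (a : ℝ) : ℝ := a * Real.log a - a + 1

def bregD (a b : ℝ) : ℝ := a * (Real.log a - Real.log b) - a + b

lemma phiE_cvx {a b t : ℝ} (ha : 0 ≤ a) (hb : 0 ≤ b) (ht0 : 0 ≤ t) (ht1 : t ≤ 1) :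
    phiE ((1 - t) * a + t * b) ≤ (1 - t) * phiE a + t * phiE b := by
  have h := Real.convexOn_mul_log.2 (Set.mem_Ici.2 ha) (Set.mem_Ici.2 hb)
    (by linarith : (0:ℝ) ≤ 1 - t) ht0 (by ring)
  simp only [smul_eq_mul] at h
  simp only [phiE]
  nlinarith [h]

lemma phiE_abs_le {a : ℝ} (h0 : 0 ≤ a) (h1 : a ≤ 1) : |phiE a| ≤ 4 := by
  rcases eq_or_lt_of_le h0 with h | h
  · simp [phiE, ← h]
  · have hlog : Real.log a ≤ 0 := Real.log_nonpos h0 h1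
    have hub : a * Real.log a ≤ 0 := mul_nonpos_of_nonneg_of_nonpos h0 hlog
    have hinv : Real.log a⁻¹ ≤ a⁻¹ - 1 := Real.log_le_sub_one_of_pos (inv_pos.2 h)
    rw [Real.log_inv] at hinv
    have hmul : a * (-Real.log a) ≤ a * (a⁻¹ - 1) := mul_le_mul_of_nonneg_left hinv h0
    have hai : a * a⁻¹ = 1 := mul_inv_cancel₀ h.ne'
    have hlb : -1 ≤ a * Real.log a := by nlinarith [hmul, hai]
    rw [phiE, abs_le]; constructor <;> nlinarith

lemma bregD_nonneg {a b : ℝ} (ha : 0 ≤ a) (hb : 0 < b) : 0 ≤ bregD a b := by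
  rcases eq_or_lt_of_le ha with h | h
  · simp [bregD, ← h]; linarith
  · have hd : Real.log (b / a) ≤ b / a - 1 := Real.log_le_sub_one_of_pos (div_pos hb h)
    rw [Real.log_div hb.ne' h.ne'] at hd
    have h2 : a * (Real.log b - Real.log a) ≤ b - a := by
      have := mul_le_mul_of_nonneg_left hd h.le
      have hba : a * (b / a) = b := by field_simp
      nlinarith
    simp only [bregD]; nlinarith

lemma bregD_eq_zero {a b : ℝ} (ha : 0 ≤ a) (hb : 0 < b) (h : bregD a b = 0) : a = b := by
  rcases eq_or_lt_of_le ha with h0 | h0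
  · exfalso; rw [bregD, ← h0] at h; simp at h; linarith
  · by_contra hne
    have hba : b / a ≠ 1 := by
      intro hh; exact hne (by field_simp at hh; linarith)
    have hd : Real.log (b / a) < b / a - 1 := Real.log_lt_sub_one_of_pos (div_pos hb h0) hba
    rw [Real.log_div hb.ne' h0.ne'] at hd
    have h2 : a * (Real.log b - Real.log a) < b - a := by
      have := mul_lt_mul_of_pos_left hd h0
      have hba' : a * (b / a) = b := by field_simp
      nlinarith
    rw [bregD] at h; nlinarith

theorem statement_3 {d n : ℕ} (hd1 : 1 ≤ d) (hd3 : d ≤ 3)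
    (Ω : Set (EuclideanSpace ℝ (Fin d))) (hΩo : IsOpen Ω)
    (hΩb : Bornology.IsBounded Ω)
    (ε β : ℝ) (hε : 0 < ε) (hβ : 0 < β)
    (m : Fin (n + 1) → ℝ) (hm : ∀ i, 0 < m i)
    (hmass : ∑ i, m i = (volume Ω).toReal)
    (u : Fin (n + 1) → EuclideanSpace ℝ (Fin d) → ℝ)
    (hu : IsLocalMinimizer Ω ε β m u) :
    ∀ i : Fin (n + 1), i ≠ 0 →
      ∀ᵐ x ∂volume.restrict Ω,
        u i x = m i / ((volume Ω).toReal - m 0) * (1 - u 0 x) := by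
  obtain ⟨⟨hmeas, hbdd, hpos, hint, hsum1, hdiff, hgradint⟩, ϵ, hϵ, hmin⟩ := hu
  set μ := volume.restrict Ω with hμdef
  haveI : IsFiniteMeasure μ := by
    constructor
    rw [hμdef, Measure.restrict_apply_univ]
    exact hΩb.measure_lt_top
  set T : ℝ := (volume Ω).toReal with hTdef
  intro i hi
  obtain ⟨j, rfl⟩ := Fin.exists_succ_eq_of_ne_zero hi
  -- basic a.e. facts
  have hG : ∀ᵐ x ∂μ, (∀ k, 0 ≤ u k x) ∧ ∑ k, u k x = 1 := (ae_all_iff.2 hpos).and hsum1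
  have hu01 : ∀ᵐ x ∂μ, ∀ k, 0 ≤ u k x ∧ u k x ≤ 1 := by
    filter_upwards [hG] with x ⟨h0, h1⟩ k
    exact ⟨h0 k, h1 ▸ Finset.single_le_sum (fun l _ => h0 l) (Finset.mem_univ k)⟩
  -- constants
  set s0 : ℝ := T - m 0 with hs0def
  have hsdecomp : s0 = ∑ k : Fin n, m k.succ := by
    have h := Fin.sum_univ_succ m
    rw [hs0def, ← hmass, h]; ring
  have hs0pos : 0 < s0 := by
    rw [hsdecomp]
    exact lt_of_lt_of_le (hm j.succ)
      (Finset.single_le_sum (fun k _ => (hm k.succ).le) (Finset.mem_univ j))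
  set c : Fin (n + 1) → ℝ := fun k => m k / s0 with hcdef
  have hcpos : ∀ k, 0 < c k := fun k => div_pos (hm k) hs0pos
  have hcle1 : ∀ k : Fin n, c k.succ ≤ 1 := by
    intro k
    rw [hcdef]
    rw [div_le_one hs0pos, hsdecomp]
    exact Finset.single_le_sum (fun l _ => (hm l.succ).le) (Finset.mem_univ k)
  have hcsum : ∑ k : Fin n, c k.succ = 1 := by
    rw [hcdef, ← Finset.sum_div, ← hsdecomp, div_self hs0pos.ne']
  -- the competitor w
  set w : Fin (n + 1) → EuclideanSpace ℝ (Fin d) → ℝ :=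
    fun k x => if k = 0 then u 0 x else c k * (1 - u 0 x) with hwdef
  have hw0 : w 0 = u 0 := by funext x; simp [hwdef]
  have hwsucc : ∀ (k : Fin n) x, w k.succ x = c k.succ * (1 - u 0 x) := by
    intro k x; simp [hwdef, Fin.succ_ne_zero k]
  have hw01 : ∀ᵐ x ∂μ, ∀ k, 0 ≤ w k x ∧ w k x ≤ 1 := by
    filter_upwards [hu01] with x hx k
    by_cases hk : k = 0
    · subst hk; rw [hw0]; exact hx 0
    · obtain ⟨l, rfl⟩ := Fin.exists_succ_eq_of_ne_zero hk
      rw [hwsucc]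
      have h1 : 0 ≤ 1 - u 0 x := by linarith [(hx 0).2]
      have h2 : 1 - u 0 x ≤ 1 := by linarith [(hx 0).1]
      constructor
      · exact mul_nonneg (hcpos l.succ).le h1
      · calc c l.succ * (1 - u 0 x) ≤ 1 * 1 :=
              mul_le_mul (hcle1 l) h2 h1 zero_le_one
          _ = 1 := by ring
  have hwmeas : ∀ k, AEStronglyMeasurable (w k) μ := by
    intro k
    by_cases hk : k = 0
    · subst hk; rw [hw0]; exact hmeas 0
    · have : w k = fun x => c k * (1 - u 0 x) := by
        funext x; simp [hwdef, hk]
      rw [this]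
      exact (aestronglyMeasurable_const.sub (hmeas 0)).const_mul _
  -- integrability from a.e. bounds
  have hIbdd : ∀ (f : EuclideanSpace ℝ (Fin d) → ℝ), AEStronglyMeasurable f μ →
      ∀ (C : ℝ), (∀ᵐ x ∂μ, |f x| ≤ C) → Integrable f μ := by
    intro f hf C hb
    exact Integrable.mono' (integrable_const C) hf (hb.mono fun x h => by simpa using h)
  have hui_int : ∀ k, Integrable (u k) μ := by
    intro k
    refine hIbdd _ (hmeas k) 1 ?_
    filter_upwards [hu01] with x hx
    rw [abs_le]; exact ⟨by linarith [(hx k).1], (hx k).2⟩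
  have hwi_int : ∀ k, Integrable (w k) μ := by
    intro k
    refine hIbdd _ (hwmeas k) 1 ?_
    filter_upwards [hw01] with x hx
    rw [abs_le]; exact ⟨by linarith [(hx k).1], (hx k).2⟩
  -- integrals of w
  have hint1mu0 : ∫ x, (1 - u 0 x) ∂μ = s0 := by
    rw [integral_sub (integrable_const 1) (hui_int 0), integral_const]
    have : μ Set.univ = volume Ω := by rw [hμdef, Measure.restrict_apply_univ]
    rw [measureReal_def, this]
    have h0 : ∫ x, u 0 x ∂μ = m 0 := hint 0
    rw [h0, hs0def, hTdef]
    simp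
  have hwint : ∀ k, ∫ x, w k x ∂μ = m k := by
    intro k
    by_cases hk : k = 0
    · subst hk; rw [hw0]; exact hint 0
    · have heq : w k = fun x => c k * (1 - u 0 x) := by funext x; simp [hwdef, hk]
      rw [heq, integral_const_mul, hint1mu0, hcdef]
      field_simp
  -- entropy measurability / integrability
  have hphimeas : ∀ (f : EuclideanSpace ℝ (Fin d) → ℝ), AEStronglyMeasurable f μ →
      AEStronglyMeasurable (fun x => phiE (f x)) μ := by
    intro f hf
    have hlog : AEStronglyMeasurable (fun x => Real.log (f x)) μ :=
      (Real.measurable_log.comp_aemeasurable hf.aemeasurable).aestronglyMeasurable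
    exact ((hf.mul hlog).sub hf).add aestronglyMeasurable_const
  have hphiu_int : ∀ k, Integrable (fun x => phiE (u k x)) μ := by
    intro k
    refine hIbdd _ (hphimeas _ (hmeas k)) 4 ?_
    filter_upwards [hu01] with x hx
    exact phiE_abs_le (hx k).1 (hx k).2
  have hphiw_int : ∀ k, Integrable (fun x => phiE (w k x)) μ := by
    intro k
    refine hIbdd _ (hphimeas _ (hwmeas k)) 4 ?_
    filter_upwards [hw01] with x hx
    exact phiE_abs_le (hx k).1 (hx k).2
  have hAu_int : Integrable (fun x => ∑ k, phiE (u k x)) μ :=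
    integrable_finset_sum _ (fun k _ => hphiu_int k)
  have hAw_int : Integrable (fun x => ∑ k, phiE (w k x)) μ :=
    integrable_finset_sum _ (fun k _ => hphiw_int k)
  -- the interpolated competitor v
  set t : ℝ := min ϵ 1 with htdef
  have ht0 : 0 < t := lt_min hϵ one_pos
  have ht1 : t ≤ 1 := min_le_right _ _
  set v : Fin (n + 1) → EuclideanSpace ℝ (Fin d) → ℝ :=
    fun k x => (1 - t) * u k x + t * w k x with hvdef
  have hv0 : v 0 = u 0 := by
    funext x; rw [hvdef]; simp only; rw [hw0]; ring
  have hv01 : ∀ᵐ x ∂μ, ∀ k, 0 ≤ v k x ∧ v k x ≤ 1 := by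
    filter_upwards [hu01, hw01] with x hx hwx k
    rw [hvdef]
    constructor
    · have := (hx k).1; have := (hwx k).1
      have h1t : (0:ℝ) ≤ 1 - t := by linarith
      positivity
    · calc (1 - t) * u k x + t * w k x ≤ (1 - t) * 1 + t * 1 := by
            have h1t : (0:ℝ) ≤ 1 - t := by linarith
            gcongr
            · exact (hx k).2
            · exact (hwx k).2
        _ = 1 := by ring
  have hvmeas : ∀ k, AEStronglyMeasurable (v k) μ := by
    intro k
    exact ((hmeas k).const_mul _).add ((hwmeas k).const_mul _)
  have hvi_int : ∀ k, Integrable (v k) μ := by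
    intro k
    exact ((hui_int k).const_mul _).add ((hwi_int k).const_mul _)
  have hvadm : Admissible Ω m v := by
    refine ⟨hvmeas, ?_, ?_, ?_, ?_, ?_, ?_⟩
    · intro k
      refine ⟨1, ?_⟩
      filter_upwards [hv01] with x hx
      rw [abs_le]; exact ⟨by linarith [(hx k).1], (hx k).2⟩
    · intro k
      filter_upwards [hv01] with x hx
      exact (hx k).1
    · intro k
      have : ∫ x, v k x ∂μ = (1 - t) * (∫ x, u k x ∂μ) + t * (∫ x, w k x ∂μ) := by
        rw [hvdef]
        rw [integral_add ((hui_int k).const_mul _) ((hwi_int k).const_mul _),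
          integral_const_mul, integral_const_mul]
      rw [this]
      have h1 : ∫ x, u k x ∂μ = m k := hint k
      rw [h1, hwint k]; ring
    · filter_upwards [hG] with x ⟨h0, h1⟩
      have hwsum : ∑ k, w k x = 1 := by
        rw [Fin.sum_univ_succ]
        have : ∀ k : Fin n, w k.succ x = c k.succ * (1 - u 0 x) := fun k => hwsucc k x
        rw [Finset.sum_congr rfl (fun k _ => this k)]
        rw [← Finset.sum_mul, hcsum, hw0]
        ring
      rw [hvdef]
      simp only
      rw [Finset.sum_add_distrib, ← Finset.mul_sum, ← Finset.mul_sum, h1, hwsum]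
      ring
    · rw [hv0]; exact hdiff
    · rw [hv0]; exact hgradint
  have hvclose : ∀ k, ∀ᵐ x ∂μ, |v k x - u k x| ≤ ϵ := by
    intro k
    filter_upwards [hu01, hw01] with x hx hwx
    have : v k x - u k x = t * (w k x - u k x) := by rw [hvdef]; ring
    rw [this, abs_mul, abs_of_pos ht0]
    have habs : |w k x - u k x| ≤ 1 := by
      rw [abs_le]
      constructor
      · linarith [(hwx k).1, (hx k).2]
      · linarith [(hwx k).2, (hx k).1]
    calc t * |w k x - u k x| ≤ t * 1 := by gcongr
      _ ≤ ϵ := by rw [mul_one]; exact min_le_left _ _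
  -- energy decomposition
  have hrest_int : Integrable
      (fun x => ε / 2 * ‖fderiv ℝ (u 0) x‖ ^ 2 + β * u 0 x * (1 - u 0 x)) μ := by
    refine Integrable.add (hgradint.const_mul _) ?_
    refine hIbdd _ ?_ (|β|) ?_
    · exact ((hmeas 0).const_mul β).mul (aestronglyMeasurable_const.sub (hmeas 0))
    · filter_upwards [hu01] with x hx
      have h0 := (hx 0).1
      have h1 := (hx 0).2
      rw [abs_mul, abs_mul]
      have ha : |u 0 x| ≤ 1 := by rw [abs_le]; exact ⟨by linarith, h1⟩
      have hb : |1 - u 0 x| ≤ 1 := by rw [abs_le]; constructor <;> linarith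
      calc |β| * |u 0 x| * |1 - u 0 x| ≤ |β| * 1 * 1 := by
            gcongr
        _ = |β| := by ring
  have hEdecomp : ∀ z : Fin (n + 1) → EuclideanSpace ℝ (Fin d) → ℝ,
      z 0 = u 0 → Integrable (fun x => ∑ k, phiE (z k x)) μ →
      energyE Ω ε β z = (∫ x, ∑ k, phiE (z k x) ∂μ) +
        ∫ x, (ε / 2 * ‖fderiv ℝ (u 0) x‖ ^ 2 + β * u 0 x * (1 - u 0 x)) ∂μ := by
    intro z hz0 hzint
    rw [energyE, hz0]
    rw [← hμdef]
    simp only [add_assoc]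
    simp only [phiE] at hzint ⊢
    rw [integral_add hzint hrest_int]
  have hEu : energyE Ω ε β u = (∫ x, ∑ k, phiE (u k x) ∂μ) +
      ∫ x, (ε / 2 * ‖fderiv ℝ (u 0) x‖ ^ 2 + β * u 0 x * (1 - u 0 x)) ∂μ :=
    hEdecomp u rfl hAu_int
  have hAv_int : Integrable (fun x => ∑ k, phiE (v k x)) μ := by
    refine integrable_finset_sum _ (fun k _ => ?_)
    refine hIbdd _ (hphimeas _ (hvmeas k)) 4 ?_
    filter_upwards [hv01] with x hx
    exact phiE_abs_le (hx k).1 (hx k).2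
  have hEv : energyE Ω ε β v = (∫ x, ∑ k, phiE (v k x) ∂μ) +
      ∫ x, (ε / 2 * ‖fderiv ℝ (u 0) x‖ ^ 2 + β * u 0 x * (1 - u 0 x)) ∂μ :=
    hEdecomp v hv0 hAv_int
  -- minimality
  have hle : energyE Ω ε β u ≤ energyE Ω ε β v := hmin v hvadm hvclose
  have hIuv : ∫ x, ∑ k, phiE (u k x) ∂μ ≤ ∫ x, ∑ k, phiE (v k x) ∂μ := by
    rw [hEu, hEv] at hle; linarith
  -- convexity
  have hcvx : ∀ᵐ x ∂μ, ∑ k, phiE (v k x) ≤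
      (1 - t) * (∑ k, phiE (u k x)) + t * (∑ k, phiE (w k x)) := by
    filter_upwards [hu01, hw01] with x hx hwx
    rw [Finset.mul_sum, Finset.mul_sum, ← Finset.sum_add_distrib]
    refine Finset.sum_le_sum (fun k _ => ?_)
    rw [hvdef]
    exact phiE_cvx (hx k).1 (hwx k).1 ht0.le ht1
  have hIvw : ∫ x, ∑ k, phiE (v k x) ∂μ ≤
      (1 - t) * (∫ x, ∑ k, phiE (u k x) ∂μ) + t * (∫ x, ∑ k, phiE (w k x) ∂μ) := by
    have h2 : Integrable (fun x => (1 - t) * (∑ k, phiE (u k x)) + t * (∑ k, phiE (w k x))) μ :=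
      (hAu_int.const_mul _).add (hAw_int.const_mul _)
    calc ∫ x, ∑ k, phiE (v k x) ∂μ
        ≤ ∫ x, ((1 - t) * (∑ k, phiE (u k x)) + t * (∑ k, phiE (w k x))) ∂μ :=
          integral_mono_ae hAv_int h2 hcvx
      _ = (1 - t) * (∫ x, ∑ k, phiE (u k x) ∂μ) + t * (∫ x, ∑ k, phiE (w k x) ∂μ) := by
          rw [integral_add (hAu_int.const_mul _) (hAw_int.const_mul _),
            integral_const_mul, integral_const_mul]
  have hIuw : ∫ x, ∑ k, phiE (u k x) ∂μ ≤ ∫ x, ∑ k, phiE (w k x) ∂μ := by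
    nlinarith [hIuv, hIvw, ht0]
  -- Bregman divergence sum
  set Dsum : EuclideanSpace ℝ (Fin d) → ℝ :=
    fun x => ∑ k : Fin n, bregD (u k.succ x) (w k.succ x) with hDdef
  set linterm : EuclideanSpace ℝ (Fin d) → ℝ :=
    fun x => ∑ k : Fin n, Real.log (c k.succ) * (u k.succ x - w k.succ x) with hlindef
  -- key pointwise identity
  have hkey : ∀ᵐ x ∂μ, (∑ k, phiE (u k x)) - (∑ k, phiE (w k x)) = Dsum x + linterm x := by
    filter_upwards [hG, hu01] with x hGx hx
    obtain ⟨h0, h1⟩ := hGx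
    have hs0x : 0 ≤ 1 - u 0 x := by linarith [(hx 0).2]
    have hsum_succ : ∑ k : Fin n, u k.succ x = 1 - u 0 x := by
      have h := Fin.sum_univ_succ (fun k => u k x)
      rw [h] at h1; linarith
    have hw0x : w 0 x = u 0 x := congrFun hw0 x
    rw [hDdef, hlindef]
    simp only
    rw [Fin.sum_univ_succ (fun k => phiE (u k x)), Fin.sum_univ_succ (fun k => phiE (w k x)),
      hw0x]
    rcases eq_or_lt_of_le hs0x with hse | hsp
    · have hzero : ∀ k : Fin n, u k.succ x = 0 := by
        intro k
        have hall := (Finset.sum_eq_zero_iff_of_nonneg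
          (s := Finset.univ) (f := fun l : Fin n => u l.succ x)
          (fun l _ => h0 l.succ)).1 (by rw [hsum_succ, ← hse])
        exact hall k (Finset.mem_univ k)
      have hwzero : ∀ k : Fin n, w k.succ x = 0 := by
        intro k; rw [hwsucc, ← hse, mul_zero]
      simp [hzero, hwzero, bregD]
    · have hterm : ∀ k : Fin n, phiE (u k.succ x) - phiE (w k.succ x) =
          bregD (u k.succ x) (w k.succ x)
            + Real.log (c k.succ) * (u k.succ x - w k.succ x)
            + Real.log (1 - u 0 x) * (u k.succ x - w k.succ x) := by
        intro k
        rw [hwsucc]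
        simp only [phiE, bregD]
        rw [Real.log_mul (hcpos k.succ).ne' hsp.ne']
        ring
      have hwsum : ∑ k : Fin n, w k.succ x = 1 - u 0 x := by
        rw [Finset.sum_congr rfl (fun k _ => hwsucc k x), ← Finset.sum_mul, hcsum, one_mul]
      have hdiff0 : ∑ k : Fin n, (u k.succ x - w k.succ x) = 0 := by
        rw [Finset.sum_sub_distrib, hsum_succ, hwsum]; ring
      calc phiE (u 0 x) + ∑ k : Fin n, phiE (u k.succ x)
            - (phiE (u 0 x) + ∑ k : Fin n, phiE (w k.succ x))
          = ∑ k : Fin n, (phiE (u k.succ x) - phiE (w k.succ x)) := by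
            rw [Finset.sum_sub_distrib]; ring
        _ = ∑ k : Fin n, (bregD (u k.succ x) (w k.succ x)
              + Real.log (c k.succ) * (u k.succ x - w k.succ x)
              + Real.log (1 - u 0 x) * (u k.succ x - w k.succ x)) :=
            Finset.sum_congr rfl (fun k _ => hterm k)
        _ = (∑ k : Fin n, bregD (u k.succ x) (w k.succ x))
              + (∑ k : Fin n, Real.log (c k.succ) * (u k.succ x - w k.succ x))
              + Real.log (1 - u 0 x) * ∑ k : Fin n, (u k.succ x - w k.succ x) := by
            rw [Finset.sum_add_distrib, Finset.sum_add_distrib, Finset.mul_sum]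
        _ = (∑ k : Fin n, bregD (u k.succ x) (w k.succ x))
              + (∑ k : Fin n, Real.log (c k.succ) * (u k.succ x - w k.succ x)) := by
            rw [hdiff0, mul_zero, add_zero]
  -- integrate
  have hlin_int : Integrable linterm μ := by
    rw [hlindef]
    exact integrable_finset_sum _ (fun k _ => ((hui_int k.succ).sub (hwi_int k.succ)).const_mul _)
  have hlin_zero : ∫ x, linterm x ∂μ = 0 := by
    rw [hlindef]
    rw [integral_finset_sum _ (fun k _ => ((hui_int k.succ).sub (hwi_int k.succ)).const_mul _)]
    refine Finset.sum_eq_zero (fun k _ => ?_)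
    rw [integral_const_mul, integral_sub (hui_int k.succ) (hwi_int k.succ),
      hint k.succ, hwint k.succ]
    ring
  have hDsum_int : Integrable Dsum μ := by
    refine Integrable.congr ((hAu_int.sub hAw_int).sub hlin_int) ?_
    filter_upwards [hkey] with x hx
    simp only [Pi.sub_apply]
    linarith
  have hDint_val : ∫ x, Dsum x ∂μ =
      (∫ x, ∑ k, phiE (u k x) ∂μ) - (∫ x, ∑ k, phiE (w k x) ∂μ) := by
    have h1 : ∫ x, Dsum x ∂μ = ∫ x, ((∑ k, phiE (u k x)) - (∑ k, phiE (w k x)) - linterm x) ∂μ := by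
      refine integral_congr_ae ?_
      filter_upwards [hkey] with x hx
      linarith
    have hfw : Integrable (fun x => (∑ k, phiE (u k x)) - (∑ k, phiE (w k x))) μ :=
      hAu_int.sub hAw_int
    rw [h1, integral_sub hfw hlin_int, integral_sub hAu_int hAw_int, hlin_zero]
    ring
  -- nonnegativity and equality case of each term
  have hDterm : ∀ᵐ x ∂μ, ∀ k : Fin n, 0 ≤ bregD (u k.succ x) (w k.succ x) ∧
      (bregD (u k.succ x) (w k.succ x) = 0 → u k.succ x = w k.succ x) := by
    filter_upwards [hG, hu01] with x hGx hx k
    obtain ⟨h0, h1⟩ := hGx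
    have hs0x : 0 ≤ 1 - u 0 x := by linarith [(hx 0).2]
    rcases eq_or_lt_of_le hs0x with hse | hsp
    · have hsum_succ : ∑ l : Fin n, u l.succ x = 1 - u 0 x := by
        have h := Fin.sum_univ_succ (fun k => u k x)
        rw [h] at h1; linarith
      have hz : u k.succ x = 0 := by
        have hall := (Finset.sum_eq_zero_iff_of_nonneg
          (s := Finset.univ) (f := fun l : Fin n => u l.succ x)
          (fun l _ => h0 l.succ)).1 (by rw [hsum_succ, ← hse])
        exact hall k (Finset.mem_univ k)
      have hwz : w k.succ x = 0 := by rw [hwsucc, ← hse, mul_zero]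
      rw [hz, hwz]
      constructor
      · simp [bregD]
      · intro _; rfl
    · have hwpos : 0 < w k.succ x := by
        rw [hwsucc]; exact mul_pos (hcpos k.succ) hsp
      exact ⟨bregD_nonneg (h0 k.succ) hwpos, fun h => bregD_eq_zero (h0 k.succ) hwpos h⟩
  have hDnonneg : ∀ᵐ x ∂μ, 0 ≤ Dsum x := by
    filter_upwards [hDterm] with x hx
    exact Finset.sum_nonneg (fun k _ => (hx k).1)
  have hDzero : ∀ᵐ x ∂μ, Dsum x = 0 := by
    have hle0 : ∫ x, Dsum x ∂μ ≤ 0 := by rw [hDint_val]; linarith [hIuw]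
    have hge0 : 0 ≤ ∫ x, Dsum x ∂μ := integral_nonneg_of_ae hDnonneg
    have := (integral_eq_zero_iff_of_nonneg_ae hDnonneg hDsum_int).1 (le_antisymm hle0 hge0)
    filter_upwards [this] with x hx
    exact hx
  -- conclusion
  filter_upwards [hDzero, hDterm] with x hx0 hxt
  have hterm0 : bregD (u j.succ x) (w j.succ x) = 0 := by
    have hall := (Finset.sum_eq_zero_iff_of_nonneg (fun k _ => (hxt k).1)).1 hx0
    exact hall j (Finset.mem_univ j)
  have := (hxt j).2 hterm0
  rw [this, hwsucc]
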